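/- arXiv:math/0505020 — 2 statements merged into one kernel-verified Lean document; each statement's English description precedes it below -/
import Mathlib

section
/- For every π ∈ S_n, the graph Γ(π) with vertex set {1,...,n} and edges { {a,b} : ℓ(t_{a,b}∘π) = ℓ(π) ± 1 } has a vertex of degree at most ⌊n/2⌋ + 1. -/
/-!
Write `x v = π⁻¹ v` for the position of the value `v`. If `{a, b}` is an edge of `Γ(π)`, no value
strictly between `a` and `b` sits at a position strictly between theirs: otherwise `t_{a,b} π` is
reached from `π` by three transpositions that all raise (or all lower) the length, so the length
changes by at least `3`.

Take consecutive values `k, k + 1` whose positions are farthest apart. A common neighbour `r` of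
both has its position between `x k` and `x (k + 1)`, for otherwise the walk from `k` or `k + 1`
to `r` through consecutive values would need a step longer than `|x (k + 1) - x k|`. Two common
neighbours on the same side of `k, k + 1` would lie in each other's rectangles, so `k` and `k + 1`
have at most two common neighbours and their degrees add up to at most `n + 2`.
-/

open Equiv Finset

/-- Number of inversions (Coxeter length) of a permutation of `Fin n`. -/
def invNum {n : ℕ} (π : Equiv.Perm (Fin n)) : ℕ :=
  (Finset.univ.filter (fun p : Fin n × Fin n => p.1 < p.2 ∧ π p.2 < π p.1)).card

/-- Down degree: number of transpositions `t_{a,b}` with `ℓ(t_{a,b} π) = ℓ(π) - 1`. -/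
def downDeg {n : ℕ} (π : Equiv.Perm (Fin n)) : ℕ :=
  (Finset.univ.filter (fun p : Fin n × Fin n =>
    p.1 < p.2 ∧ invNum (Equiv.swap p.1 p.2 * π) + 1 = invNum π)).card

/-- Total degree: number of transpositions `t_{a,b}` with `ℓ(t_{a,b} π) = ℓ(π) ± 1`. -/
def totalDeg {n : ℕ} (π : Equiv.Perm (Fin n)) : ℕ :=
  (Finset.univ.filter (fun p : Fin n × Fin n =>
    p.1 < p.2 ∧ (invNum (Equiv.swap p.1 p.2 * π) + 1 = invNum π ∨
      invNum (Equiv.swap p.1 p.2 * π) = invNum π + 1))).card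

section Inversions

variable {n : ℕ}

def inversions (π : Perm (Fin n)) : Finset (Fin n × Fin n) :=
  univ.filter fun p => p.1 < p.2 ∧ π p.2 < π p.1

@[simp]
lemma mem_inversions {π : Perm (Fin n)} {p : Fin n × Fin n} :
    p ∈ inversions π ↔ p.1 < p.2 ∧ π p.2 < π p.1 := by
  simp [inversions]

lemma card_inversions (π : Perm (Fin n)) : (inversions π).card = invNum π := rfl

lemma invNum_lt_invNum_mul_swap {π : Perm (Fin n)} {i j : Fin n} (hij : i < j)
    (h : π i < π j) : invNum π < invNum (π * swap i j) := by
  -- move both entries by `swap i j` unless this reverses the pair; `(i, j)` is never hit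
  let ψ : Fin n × Fin n → Fin n × Fin n := fun p =>
    if swap i j p.1 < swap i j p.2 then (swap i j p.1, swap i j p.2) else p
  have hmaps : Set.MapsTo ψ (inversions π) ((inversions (π * swap i j)).erase (i, j)) := by
    rintro ⟨p, q⟩ hpq
    simp only [coe_erase, mem_coe, Set.mem_sdiff, mem_inversions, Set.mem_singleton_iff] at hpq ⊢
    simp only [ψ, Perm.mul_apply, swap_apply_def] at hpq ⊢
    split_ifs at hpq ⊢ <;> grind
  have hinj : Set.InjOn ψ (inversions π) := by
    rintro ⟨p, q⟩ hpq ⟨p', q'⟩ hpq' hψ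
    simp only [mem_coe, mem_inversions] at hpq hpq'
    simp only [ψ] at hψ
    by_cases h1 : swap i j p < swap i j q <;> by_cases h2 : swap i j p' < swap i j q' <;>
      simp only [h1, h2, if_true, if_false, Prod.mk.injEq] at hψ
    · simpa using hψ
    · obtain ⟨rfl, rfl⟩ := hψ
      exact absurd hpq.1 (by simpa using h2)
    · obtain ⟨rfl, rfl⟩ := hψ
      exact absurd hpq'.1 (by simpa using h1)
    · simpa using hψ
  have hij_mem : (i, j) ∈ inversions (π * swap i j) := by simpa [hij] using h
  have hle := card_le_card_of_injOn ψ hmaps hinj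
  rw [card_erase_of_mem hij_mem, card_inversions, card_inversions] at hle
  have hpos := card_pos.mpr ⟨_, hij_mem⟩
  rw [card_inversions] at hpos
  omega

lemma invNum_add_three_le_invNum_mul_swap {π : Perm (Fin n)} {i m j : Fin n} (him : i < m)
    (hmj : m < j) (h₁ : π i < π m) (h₂ : π m < π j) : invNum π + 3 ≤ invNum (π * swap i j) := by
  have hconj : swap i j = swap i m * swap m j * swap i m := by
    rw [swap_comm i m, swap_comm m j, swap_mul_swap_mul_swap hmj.ne' (him.trans hmj).ne']
  have step₁ := invNum_lt_invNum_mul_swap him h₁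
  have step₂ := invNum_lt_invNum_mul_swap (π := π * swap i m) hmj (by
    simpa [swap_apply_of_ne_of_ne (him.trans hmj).ne' hmj.ne'] using h₁.trans h₂)
  have step₃ := invNum_lt_invNum_mul_swap (π := π * swap i m * swap m j) him (by
    simpa [swap_apply_of_ne_of_ne him.ne (him.trans hmj).ne,
      swap_apply_of_ne_of_ne (him.trans hmj).ne' hmj.ne'] using h₂)
  rw [hconj, ← mul_assoc, ← mul_assoc]
  omega

lemma invNum_add_three_le_of_mem_uIoo {π : Perm (Fin n)} {a b c : Fin n} (hac : a < c)
    (hcb : c < b) (hc : π⁻¹ c ∈ Set.uIoo (π⁻¹ a) (π⁻¹ b)) :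
    invNum π + 3 ≤ invNum (swap a b * π) ∨ invNum (swap a b * π) + 3 ≤ invNum π := by
  rw [Set.uIoo_eq_union] at hc
  rcases hc with ⟨h₁, h₂⟩ | ⟨h₁, h₂⟩
  · left
    rw [swap_mul_eq_mul_swap]
    exact invNum_add_three_le_invNum_mul_swap h₁ h₂ (by simpa using hac) (by simpa using hcb)
  · right
    have hback : swap a b * π * swap (π⁻¹ b) (π⁻¹ a) = π := by
      rw [mul_swap_eq_swap_mul]
      simp [← mul_assoc]
    have := invNum_add_three_le_invNum_mul_swap (π := swap a b * π) h₁ h₂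
      (by simpa [swap_apply_of_ne_of_ne hac.ne' hcb.ne] using hac)
      (by simpa [swap_apply_of_ne_of_ne hac.ne' hcb.ne] using hcb)
    rwa [hback] at this

end Inversions

def IsEmptyRect (x : ℕ → ℤ) (a b : ℕ) : Prop :=
  ∀ c ∈ Set.uIoo a b, x c ∉ Set.uIoo (x a) (x b)

namespace IsEmptyRect

variable {x : ℕ → ℤ} {a b : ℕ}

lemma symm (h : IsEmptyRect x a b) : IsEmptyRect x b a := by
  intro c hc
  rw [Set.uIoo_comm (x b)]
  exact h c (Set.uIoo_comm b a ▸ hc)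

lemma neg (h : IsEmptyRect x a b) : IsEmptyRect (fun c => -x c) a b := by
  intro c hc hxc
  refine h c hc ?_
  simp only [Set.uIoo_eq_union, Set.mem_union, Set.mem_Ioo] at hxc ⊢
  omega

lemma exists_abs_sub_le (h : IsEmptyRect x a b) (hab : a < b) :
    ∃ j, a ≤ j ∧ j < b ∧ |x b - x a| ≤ |x (j + 1) - x j| := by
  wlog hx : x a ≤ x b generalizing x
  · obtain ⟨j, haj, hjb, hgap⟩ := this h.neg (by omega)
    refine ⟨j, haj, hjb, ?_⟩
    rwa [neg_sub_neg, neg_sub_neg, abs_sub_comm, abs_sub_comm (x j)] at hgap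
  -- the last `j < b` with `x j ≤ x a` is followed by a point at or beyond `x b`
  set j := Nat.findGreatest (fun j => x j ≤ x a) (b - 1)
  have haj : a ≤ j := Nat.le_findGreatest (by omega) le_rfl
  have hjb : j < b := by have := Nat.findGreatest_le (P := fun j => x j ≤ x a) (b - 1); omega
  have hxj : x j ≤ x a :=
    Nat.findGreatest_spec (P := fun j => x j ≤ x a) (by omega : a ≤ b - 1) le_rfl
  have hxj₁ : x b ≤ x (j + 1) := by
    rcases (show j + 1 ≤ b by omega).eq_or_lt with hb | hb
    · rw [hb]
    · have hgt : ¬ x (j + 1) ≤ x a := Nat.findGreatest_is_greatest (Nat.lt_succ_self j) (by omega)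
      have hout := h (j + 1) (by rw [Set.uIoo_of_lt hab]; exact ⟨by omega, hb⟩)
      simp only [Set.uIoo_eq_union, Set.mem_union, Set.mem_Ioo] at hout
      omega
  refine ⟨j, haj, hjb, ?_⟩
  rw [abs_of_nonneg (by omega), abs_of_nonneg (by omega)]
  omega

end IsEmptyRect

lemma abs_sub_lt_abs_sub_of_notMem_uIoo {u v w : ℤ} (huw : u ≠ w) (hvw : v ≠ w)
    (hv : v ∉ Set.uIoo u w) (hw : w ∉ Set.uIoo u v) : |v - u| < |w - v| := by
  simp only [Set.uIoo_eq_union, Set.mem_union, Set.mem_Ioo] at hv hw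
  rcases abs_cases (v - u) with h₁ | h₁ <;> rcases abs_cases (w - v) with h₂ | h₂ <;> omega

section MaxGap

variable {x : ℕ → ℤ} {n k : ℕ}

lemma mem_uIoo_of_isEmptyRect (hx : Set.InjOn x (Set.Iio n)) (hk : k + 1 < n)
    (hmax : ∀ j, j + 1 < n → |x (j + 1) - x j| ≤ |x (k + 1) - x k|) {r : ℕ} (hr : r < n)
    (hrk : r ≠ k) (hrk₁ : r ≠ k + 1) (h₀ : IsEmptyRect x k r) (h₁ : IsEmptyRect x (k + 1) r) :
    x r ∈ Set.uIoo (x k) (x (k + 1)) := by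
  by_contra hout
  have hxk : x k ≠ x r := (hx.ne_iff (by simp; omega) hr).2 (Ne.symm hrk)
  have hxk₁ : x (k + 1) ≠ x r := (hx.ne_iff hk hr).2 (Ne.symm hrk₁)
  rcases Nat.lt_or_gt_of_ne hrk with hrk | hrk
  · have hlt := abs_sub_lt_abs_sub_of_notMem_uIoo hxk₁ hxk
      (h₁ k (by rw [Set.uIoo_of_gt (by omega)]; exact ⟨hrk, by omega⟩))
      (by rwa [Set.uIoo_comm])
    obtain ⟨j, -, hjk, hgap⟩ := h₀.symm.exists_abs_sub_le hrk
    have := hmax j (by omega)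
    rw [abs_sub_comm (x k)] at hlt
    rw [abs_sub_comm (x k)] at hgap
    omega
  · have hlt := abs_sub_lt_abs_sub_of_notMem_uIoo hxk hxk₁
      (h₀ (k + 1) (by rw [Set.uIoo_of_lt (by omega)]; exact ⟨by omega, by omega⟩)) hout
    obtain ⟨j, -, hjr, hgap⟩ := h₁.exists_abs_sub_le (by omega)
    have := hmax j (by omega)
    omega

lemma eq_of_isEmptyRect_of_lt (hx : Set.InjOn x (Set.Iio n)) (hk : k + 1 < n)
    (hmax : ∀ j, j + 1 < n → |x (j + 1) - x j| ≤ |x (k + 1) - x k|) {r₁ r₂ : ℕ}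
    (hr₁ : r₁ < k) (hr₂ : r₂ < k) (h₁ : IsEmptyRect x k r₁) (h₁' : IsEmptyRect x (k + 1) r₁)
    (h₂ : IsEmptyRect x k r₂) (h₂' : IsEmptyRect x (k + 1) r₂) : r₁ = r₂ := by
  wlog hlt : r₁ < r₂ generalizing r₁ r₂
  · rcases (not_lt.1 hlt).eq_or_lt with heq | hgt
    · exact heq.symm
    · exact (this hr₂ hr₁ h₂ h₂' h₁ h₁' hgt).symm
  have hin₁ := mem_uIoo_of_isEmptyRect hx hk hmax (by omega) (by omega) (by omega) h₁ h₁'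
  have hin₂ := mem_uIoo_of_isEmptyRect hx hk hmax (by omega) (by omega) (by omega) h₂ h₂'
  have hne : x r₁ ≠ x r₂ := (hx.ne_iff (by simp; omega) (by simp; omega)).2 hlt.ne
  have hout := h₁.symm r₂ (by rw [Set.uIoo_of_lt (by omega)]; exact ⟨hlt, hr₂⟩)
  have hout' := h₁'.symm r₂ (by rw [Set.uIoo_of_lt (by omega)]; exact ⟨hlt, by omega⟩)
  simp only [Set.uIoo_eq_union, Set.mem_union, Set.mem_Ioo] at hin₁ hin₂ hout hout'
  omega

lemma eq_of_isEmptyRect_of_gt (hx : Set.InjOn x (Set.Iio n)) (hk : k + 1 < n)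
    (hmax : ∀ j, j + 1 < n → |x (j + 1) - x j| ≤ |x (k + 1) - x k|) {r₁ r₂ : ℕ}
    (hr₁ : k + 1 < r₁) (hr₂ : k + 1 < r₂) (hr₁n : r₁ < n) (hr₂n : r₂ < n)
    (h₁ : IsEmptyRect x k r₁) (h₁' : IsEmptyRect x (k + 1) r₁)
    (h₂ : IsEmptyRect x k r₂) (h₂' : IsEmptyRect x (k + 1) r₂) : r₁ = r₂ := by
  wlog hlt : r₁ < r₂ generalizing r₁ r₂
  · rcases (not_lt.1 hlt).eq_or_lt with heq | hgt
    · exact heq.symm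
    · exact (this hr₂ hr₁ hr₂n hr₁n h₂ h₂' h₁ h₁' hgt).symm
  have hin₁ := mem_uIoo_of_isEmptyRect hx hk hmax hr₁n (by omega) (by omega) h₁ h₁'
  have hin₂ := mem_uIoo_of_isEmptyRect hx hk hmax hr₂n (by omega) (by omega) h₂ h₂'
  have hne : x r₁ ≠ x r₂ := (hx.ne_iff hr₁n hr₂n).2 hlt.ne
  have hout := h₂ r₁ (by rw [Set.uIoo_of_lt (by omega)]; exact ⟨by omega, hlt⟩)
  have hout' := h₂' r₁ (by rw [Set.uIoo_of_lt (by omega)]; exact ⟨hr₁, hlt⟩)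
  simp only [Set.uIoo_eq_union, Set.mem_union, Set.mem_Ioo] at hin₁ hin₂ hout hout'
  omega

end MaxGap

section BruhatGraph

variable {n : ℕ}

/-- The graph `Γ(π)` of covers and cocovers of `π` in the Bruhat order. -/
def bruhatGraph (π : Perm (Fin n)) : SimpleGraph (Fin n) where
  Adj a b := a ≠ b ∧ (invNum (swap a b * π) + 1 = invNum π ∨ invNum (swap a b * π) = invNum π + 1)
  symm := ⟨fun a b h => by rwa [ne_comm, swap_comm]⟩
  loopless := ⟨fun a h => h.1 rfl⟩

instance (π : Perm (Fin n)) : DecidableRel (bruhatGraph π).Adj :=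
  fun _ _ => inferInstanceAs (Decidable (_ ∧ _))

lemma degree_bruhatGraph (π : Perm (Fin n)) (a : Fin n) :
    (bruhatGraph π).degree a = (Finset.univ.filter (fun b : Fin n => b ≠ a ∧
        (invNum (Equiv.swap a b * π) + 1 = invNum π ∨
         invNum (Equiv.swap a b * π) = invNum π + 1))).card := by
  rw [← SimpleGraph.card_neighborFinset_eq_degree]
  congr 1
  ext b
  simp only [SimpleGraph.mem_neighborFinset, mem_filter, mem_univ, true_and]
  exact and_congr ne_comm Iff.rfl

/-- The position `π⁻¹ v` of the value `v`, as an integer; junk value `0` for `v ≥ n`. -/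
def position (π : Perm (Fin n)) (v : ℕ) : ℤ :=
  if h : v < n then (π⁻¹ ⟨v, h⟩ : ℕ) else 0

@[simp]
lemma position_val (π : Perm (Fin n)) (a : Fin n) : position π a = (π⁻¹ a : ℕ) := by
  simp [position]

lemma injOn_position (π : Perm (Fin n)) : Set.InjOn (position π) (Set.Iio n) := by
  intro u hu v hv huv
  lift u to Fin n using hu
  lift v to Fin n using hv
  simpa [Fin.val_inj] using huv

lemma isEmptyRect_position_of_adj {π : Perm (Fin n)} {a b : Fin n}
    (h : (bruhatGraph π).Adj a b) : IsEmptyRect (position π) a b := by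
  wlog hab : a < b generalizing a b
  · exact (this h.symm (h.ne.lt_or_gt.resolve_left hab)).symm
  intro c hc hxc
  rw [Set.uIoo_of_lt (by simpa)] at hc
  lift c to Fin n using (hc.2.trans b.isLt)
  have hmid : π⁻¹ c ∈ Set.uIoo (π⁻¹ a) (π⁻¹ b) := by
    simp only [position_val, Set.uIoo_eq_union, Set.mem_union, Set.mem_Ioo, Fin.lt_def] at hxc ⊢
    omega
  have := invNum_add_three_le_of_mem_uIoo (Fin.lt_def.2 hc.1) (Fin.lt_def.2 hc.2) hmid
  rcases h with ⟨-, h⟩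
  omega

end BruhatGraph

lemma SimpleGraph.exists_degree_le_of_card_inter_le {V : Type*} [Fintype V] [DecidableEq V]
    (G : SimpleGraph V) [DecidableRel G.Adj] {v w : V} {m : ℕ}
    (h : #(G.neighborFinset v ∩ G.neighborFinset w) ≤ m) :
    ∃ u, G.degree u ≤ (Fintype.card V + m) / 2 := by
  have hunion := card_le_univ (G.neighborFinset v ∪ G.neighborFinset w)
  have hsum := card_union_add_card_inter (G.neighborFinset v) (G.neighborFinset w)
  rw [G.card_neighborFinset_eq_degree, G.card_neighborFinset_eq_degree] at hsum
  rcases le_total (G.degree v) (G.degree w) with hvw | hwv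
  · exact ⟨v, by omega⟩
  · exact ⟨w, by omega⟩

lemma exists_max_abs_sub_succ {n : ℕ} (x : ℕ → ℤ) (hn : 2 ≤ n) :
    ∃ k, k + 1 < n ∧ ∀ j, j + 1 < n → |x (j + 1) - x j| ≤ |x (k + 1) - x k| := by
  obtain ⟨k, hk, hmax⟩ := (range (n - 1)).exists_max_image (fun j => |x (j + 1) - x j|)
    ⟨0, mem_range.2 (by omega)⟩
  exact ⟨k, by simp at hk; omega, fun j hj => hmax j (mem_range.2 (by omega))⟩

lemma card_inter_neighborFinset_bruhatGraph_le_two {n : ℕ} (π : Perm (Fin n)) {k : ℕ}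
    (hk : k + 1 < n)
    (hmax : ∀ j, j + 1 < n → |position π (j + 1) - position π j| ≤
      |position π (k + 1) - position π k|) :
    #((bruhatGraph π).neighborFinset ⟨k, by omega⟩ ∩ (bruhatGraph π).neighborFinset ⟨k + 1, hk⟩)
      ≤ 2 := by
  set S :=
    (bruhatGraph π).neighborFinset ⟨k, by omega⟩ ∩ (bruhatGraph π).neighborFinset ⟨k + 1, hk⟩
  have hrect : ∀ r ∈ S, IsEmptyRect (position π) k r ∧ IsEmptyRect (position π) (k + 1) r ∧
      r ≠ (⟨k, by omega⟩ : Fin n) ∧ r ≠ ⟨k + 1, hk⟩ := by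
    intro r hr
    simp only [S, mem_inter, SimpleGraph.mem_neighborFinset] at hr
    exact ⟨isEmptyRect_position_of_adj hr.1, isEmptyRect_position_of_adj hr.2, hr.1.ne.symm,
      hr.2.ne.symm⟩
  have hsplit : S ⊆
      S.filter (fun r : Fin n => (r : ℕ) < k) ∪ S.filter (fun r : Fin n => k + 1 < (r : ℕ)) := by
    intro r hr
    obtain ⟨-, -, hrk, hrk₁⟩ := hrect r hr
    simp only [mem_union, mem_filter, hr, true_and]
    have hrk' : (r : ℕ) ≠ k := fun h => hrk (Fin.ext h)
    have hrk₁' : (r : ℕ) ≠ k + 1 := fun h => hrk₁ (Fin.ext h)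
    omega
  have hbelow : #(S.filter (fun r : Fin n => (r : ℕ) < k)) ≤ 1 := by
    refine card_le_one.2 fun r₁ h₁ r₂ h₂ => ?_
    rw [mem_filter] at h₁ h₂
    obtain ⟨e₁, e₁', -⟩ := hrect r₁ h₁.1
    obtain ⟨e₂, e₂', -⟩ := hrect r₂ h₂.1
    exact Fin.ext (eq_of_isEmptyRect_of_lt (injOn_position π) hk hmax h₁.2 h₂.2 e₁ e₁' e₂ e₂')
  have habove : #(S.filter (fun r : Fin n => k + 1 < (r : ℕ))) ≤ 1 := by
    refine card_le_one.2 fun r₁ h₁ r₂ h₂ => ?_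
    rw [mem_filter] at h₁ h₂
    obtain ⟨e₁, e₁', -⟩ := hrect r₁ h₁.1
    obtain ⟨e₂, e₂', -⟩ := hrect r₂ h₂.1
    exact Fin.ext (eq_of_isEmptyRect_of_gt (injOn_position π) hk hmax h₁.2 h₂.2 r₁.isLt r₂.isLt
      e₁ e₁' e₂ e₂')
  calc #S ≤ _ := card_le_card hsplit
    _ ≤ _ := card_union_le _ _
    _ ≤ 2 := by omega

/-- The Hasse-diagram graph of π has a vertex of degree at most n/2 + 1. -/
theorem exists_small_degree_vertex {n : ℕ} (hn : 0 < n) (π : Equiv.Perm (Fin n)) :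
    ∃ a : Fin n,
      (Finset.univ.filter (fun b : Fin n => b ≠ a ∧
        (invNum (Equiv.swap a b * π) + 1 = invNum π ∨
         invNum (Equiv.swap a b * π) = invNum π + 1))).card ≤ n / 2 + 1 := by
  simp only [← degree_bruhatGraph]
  rcases lt_or_ge n 2 with hn₂ | hn₂
  · refine ⟨⟨0, hn⟩, ?_⟩
    have := (bruhatGraph π).degree_lt_card_verts ⟨0, hn⟩
    simp only [Fintype.card_fin] at this
    omega
  obtain ⟨k, hk, hmax⟩ := exists_max_abs_sub_succ (position π) hn₂
  obtain ⟨u, hu⟩ := (bruhatGraph π).exists_degree_le_of_card_inter_le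
    (card_inter_neighborFinset_bruhatGraph_le_two π hk hmax)
  refine ⟨u, ?_⟩
  rw [Fintype.card_fin] at hu
  omega
end

section
/- For every π ∈ S_n and 1 ≤ r < n, the r-th down degree satisfies d_−^{(r)}(π) = d_−^{(r)}(π^{-1}). -/
open Equiv Finset

/-- The r-th down degree of π. -/
def rDownDeg {n : ℕ} (r : ℕ) (π : Equiv.Perm (Fin n)) : ℕ :=
  (Finset.univ.filter (fun p : Fin n × Fin n => p.1 < p.2 ∧
    invNum (Equiv.swap p.1 p.2 * π) < invNum π ∧
    invNum π < invNum (Equiv.swap p.1 p.2 * π) + 2 * r)).card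

/-!
Since `(t_{a,b} π)⁻¹ = π⁻¹ t_{a,b} = t_{π⁻¹ a, π⁻¹ b} π⁻¹` and the inversion number is invariant
under inversion, `ℓ(t_{a,b} π) = ℓ(t_{π⁻¹ a, π⁻¹ b} π⁻¹)` while `ℓ(π) = ℓ(π⁻¹)`. Hence
`{a, b} ↦ {π⁻¹ a, π⁻¹ b}` matches the transpositions counted for `π` with those counted for `π⁻¹`.
To avoid sorting the image pair, both sides are counted over ordered pairs `a ≠ b`, which doubles them.
-/

lemma invNum_inv {n : ℕ} (π : Perm (Fin n)) : invNum π⁻¹ = invNum π := by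
  refine card_equiv ((Equiv.prodComm _ _).trans (π⁻¹.prodCongr π⁻¹)) fun p => ?_
  simp [and_comm]

lemma swap_inv_apply_mul_inv {α : Type*} [DecidableEq α] (π : Perm α) (a b : α) :
    swap (π⁻¹ a) (π⁻¹ b) * π⁻¹ = (swap a b * π)⁻¹ := by
  rw [swap_apply_apply, mul_inv_rev, swap_inv]
  group

lemma invNum_swap_inv_apply_mul_inv {n : ℕ} (π : Perm (Fin n)) (a b : Fin n) :
    invNum (swap (π⁻¹ a) (π⁻¹ b) * π⁻¹) = invNum (swap a b * π) := by
  rw [swap_inv_apply_mul_inv, invNum_inv]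

lemma two_mul_card_filter_lt {α : Type*} [LinearOrder α] [Fintype α] (Q : α → α → Prop)
    [DecidableRel Q] (hQ : ∀ a b, Q a b → Q b a) :
    2 * #{p : α × α | p.1 < p.2 ∧ Q p.1 p.2} = #{p : α × α | p.1 ≠ p.2 ∧ Q p.1 p.2} := by
  have hflip : #{p : α × α | p.2 < p.1 ∧ Q p.1 p.2} = #{p : α × α | p.1 < p.2 ∧ Q p.1 p.2} :=
    card_equiv (Equiv.prodComm α α) fun p => by
      simpa using and_congr_right fun _ => ⟨hQ _ _, hQ _ _⟩
  have hsplit : #{p : α × α | p.1 ≠ p.2 ∧ Q p.1 p.2} =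
      #(univ.filter (fun p : α × α => p.1 < p.2 ∧ Q p.1 p.2) ∪
        univ.filter (fun p : α × α => p.2 < p.1 ∧ Q p.1 p.2)) := by
    simp only [← filter_or, ne_iff_lt_or_gt, or_and_right]
  rw [hsplit, card_union_of_disjoint, hflip, two_mul]
  exact disjoint_filter.2 fun p _ h h' => h.1.asymm h'.1

lemma card_filter_swap_mul_inv {n : ℕ} (P : ℕ → Prop) [DecidablePred P] (π : Perm (Fin n)) :
    #{p : Fin n × Fin n | p.1 < p.2 ∧ P (invNum (swap p.1 p.2 * π))} =
      #{p : Fin n × Fin n | p.1 < p.2 ∧ P (invNum (swap p.1 p.2 * π⁻¹))} := by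
  refine Nat.eq_of_mul_eq_mul_left two_pos ?_
  rw [two_mul_card_filter_lt (fun a b => P (invNum (swap a b * π))) fun a b => by
      rw [swap_comm]; exact id,
    two_mul_card_filter_lt (fun a b => P (invNum (swap a b * π⁻¹))) fun a b => by
      rw [swap_comm]; exact id]
  refine card_equiv (π⁻¹.prodCongr π⁻¹) fun p => ?_
  simp only [mem_filter, mem_univ, true_and, prodCongr_apply, Prod.map_fst, Prod.map_snd,
    (π⁻¹).injective.ne_iff, invNum_swap_inv_apply_mul_inv]

theorem rDownDeg_inv_general {n r : ℕ} (π : Equiv.Perm (Fin n)) :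
    rDownDeg r π = rDownDeg r π⁻¹ := by
  simpa only [rDownDeg, invNum_inv] using
    card_filter_swap_mul_inv (fun m => m < invNum π ∧ invNum π < m + 2 * r) π

theorem rDownDeg_inv {n r : ℕ} (hr : 1 ≤ r) (hrn : r < n) (π : Equiv.Perm (Fin n)) :
    rDownDeg r π = rDownDeg r π⁻¹ :=
  rDownDeg_inv_general π
end
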